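/- arXiv:2601.02610 — 3 statements merged into one kernel-verified Lean document; each statement's English description precedes it below -/
import Mathlib

section
/- Let s_1,…,s_{n+m} be pairwise distinct reals and define ℓ̂ = max argmin_{ℓ ∈ {0,…,n+1}} (ℓ/(n+1) − (α/m)·#{j ∈ {1,…,m} : p_j ≤ ℓ/(n+1)}). Then for every i ∈ {1,…,m}: if σ(k̂_SL) = i, then p_i = ℓ̂/(n+1); moreover ℓ̂ ≤ ⌊α(n+1)⌋. -/
open MeasureTheory Finset

noncomputable section

attribute [local instance] Classical.propDecidable

/-- The conformal p-value of test point `i` (scores are `s 1, …, s (n+m)`,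
calibration scores are `s 1, …, s n`, the `i`-th test score is `s (n+i)`). -/
def pval (n : ℕ) (s : ℕ → ℝ) (i : ℕ) : ℝ :=
  (1 + (((Finset.Icc 1 n)).filter (fun j => s (n + i) ≤ s j)).card) / (n + 1)

/-- The p-value attached to the `k`-th largest test score, with the convention
`pOrd … 0 = 0`. -/
def pOrd (n : ℕ) (s : ℕ → ℝ) (σ : ℕ → ℕ) (k : ℕ) : ℝ :=
  if k = 0 then 0 else pval n s (σ k)

/-- The largest element of `argmin_{k ∈ {0,…,m}} f k`. -/
def maxArgmin (m : ℕ) (f : ℕ → ℝ) : ℕ :=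
  sSup {k | k ≤ m ∧ ∀ k' ≤ m, f k ≤ f k'}

/-- The largest element of the argmin of `f` over `{k ∈ {0,…,m} | P k}`. -/
def maxArgminOn (m : ℕ) (P : ℕ → Prop) (f : ℕ → ℝ) : ℕ :=
  sSup {k | k ≤ m ∧ P k ∧ ∀ k' ≤ m, P k' → f k ≤ f k'}

/-- The SL (support line) index `k̂_SL` at level `α`. -/
def khatSL (n m : ℕ) (α : ℝ) (s : ℕ → ℝ) (σ : ℕ → ℕ) : ℕ :=
  maxArgmin m (fun k => pOrd n s σ k - α * k / m)

/-- The SLC (support line conformal) index `k̂_SLC` at level `α`. -/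
def khatSLC (n m : ℕ) (α : ℝ) (s : ℕ → ℝ) (σ : ℕ → ℕ) : ℕ :=
  maxArgmin m (fun k => pOrd n s σ k - k * max (α / m - 1 / (n + 1)) 0)

/-- `σ` is the permutation of `{1,…,m}` ordering the test scores decreasingly,
with the convention `σ 0 = 0`. -/
def SortsTest (n m : ℕ) (s : ℕ → ℝ) (σ : ℕ → ℕ) : Prop :=
  σ 0 = 0 ∧ Set.BijOn σ (Finset.Icc 1 m) (Finset.Icc 1 m) ∧
    ∀ k ∈ Finset.Icc 1 m, ∀ k' ∈ Finset.Icc 1 m, k < k' → s (n + σ k') < s (n + σ k)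

/-- `σ'` enumerates the subsample `A ⊆ {1,…,m}` so that the corresponding test
scores are decreasing, with the convention `σ' 0 = 0`. -/
def SortsSub (n : ℕ) (s : ℕ → ℝ) (A : Finset ℕ) (σ' : ℕ → ℕ) : Prop :=
  σ' 0 = 0 ∧ Set.BijOn σ' (Finset.Icc 1 A.card) ↑A ∧
    ∀ k ∈ Finset.Icc 1 A.card, ∀ k' ∈ Finset.Icc 1 A.card, k < k' →
      s (n + σ' k') < s (n + σ' k)

/-- The indices of the calibration scores together with the indices of the
null test scores. -/
def NullIdx (n : ℕ) (H0 : Finset ℕ) : Finset ℕ :=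
  Finset.Icc 1 n ∪ H0.image (fun i => n + i)

/-- Assumption (A1), first part: the joint law of the scores is invariant under any
permutation of the coordinates indexed by `{1,…,n} ∪ {n+i : i ∈ H0}` fixing all the
other coordinates. -/
def ExchangeableNulls {Ω : Type*} [MeasurableSpace Ω] (μ : Measure Ω)
    (n : ℕ) (H0 : Finset ℕ) (S : Ω → ℕ → ℝ) : Prop :=
  ∀ e : Equiv.Perm ℕ, (∀ j ∉ NullIdx n H0, e j = j) →
    Measure.map (fun ω => fun j => S ω (e j)) μ = Measure.map S μ

/-- The event `Ω_i`: the largest test score other than `S_{n+i}` is at least the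
maximum of the calibration scores and of `S_{n+i}`. -/
def OmegaEvent {Ω : Type*} (n m : ℕ) (S : Ω → ℕ → ℝ) (i : ℕ) : Set Ω :=
  {ω | ∃ j ∈ (Finset.Icc 1 m).erase i,
    ∀ l ∈ Finset.Icc 1 n ∪ {n + i}, S ω l ≤ S ω (n + j)}

/-- The Storey estimator `π̂₀` with parameter `s0`. -/
def storey (n m s0 : ℕ) (s : ℕ → ℝ) : ℝ :=
  (1 + (((Finset.Icc 1 m)).filter
      (fun i => ((s0 : ℝ) + 1) / (n + 1) ≤ pval n s i)).card) /
    (m * (1 - ((s0 : ℝ) + 1) / (n + 1)))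

/-- The adaptive SL index `k̂_ASL` at level `α` with Storey parameter `s0`. -/
def khatASL (n m s0 : ℕ) (α : ℝ) (s : ℕ → ℝ) (σ : ℕ → ℕ) : ℕ :=
  maxArgminOn m (fun k => pOrd n s σ k ≤ (s0 : ℝ) / (n + 1))
    (fun k => pOrd n s σ k - α * k / (m * storey n m s0 s))

/-- The adaptive SLC index `k̂_ASLC` at level `α` with Storey parameter `s0`. -/
def khatASLC (n m s0 : ℕ) (α : ℝ) (s : ℕ → ℝ) (σ : ℕ → ℕ) : ℕ :=
  maxArgmin m (fun k =>
    pOrd n s σ k - k * max (α / (m * storey n m s0 s) - 1 / (n + 1)) 0)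

/-- The rejection set of the top-`k` procedure: all test points whose score is at
least the `k`-th largest one in the (sub)ordering `σ'` (empty if `k = 0`). -/
def rejSet (n m : ℕ) (s : ℕ → ℝ) (σ' : ℕ → ℕ) (k : ℕ) : Finset ℕ :=
  if k = 0 then ∅ else (Finset.Icc 1 m).filter (fun i => s (n + σ' k) ≤ s (n + i))

/-- Probability of drawing a given subsample, for the uniform distribution over
subsets of `{1,…,m}` of cardinality `t`. -/
def subProb (m t : ℕ) (A : Finset ℕ) : ENNReal :=
  if A ∈ (Finset.Icc 1 m).powersetCard t
    then (((Finset.Icc 1 m).powersetCard t).card : ENNReal)⁻¹ else 0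

/-- The `q`-th largest value among `v 0, …, v (B-1)`. -/
def kthLargest (B q : ℕ) (v : ℕ → ℕ) : ℕ :=
  sSup {t | q ≤ ((Finset.range B).filter (fun b => t ≤ v b)).card}

/-- The adaptive subsampled index: ASLC applied to a subsample of size `t`
(enumerated by `σ'`), where the Storey estimator is computed on the full test
sample of size `m`. -/
def khatASLCsub (n m t s0 : ℕ) (α : ℝ) (s : ℕ → ℝ) (σ' : ℕ → ℕ) : ℕ :=
  maxArgminOn t (fun k => pOrd n s σ' k ≤ (s0 : ℝ) / (n + 1))
    (fun k => pOrd n s σ' k - k * max (α / (storey n m s0 s * t) - 1 / (n + 1)) 0)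


/-- Auxiliary: the argmin set is attained by `maxArgmin`. -/
lemma maxArgmin_mem' (m : ℕ) (f : ℕ → ℝ) :
    maxArgmin m f ≤ m ∧ ∀ k' ≤ m, f (maxArgmin m f) ≤ f k' := by
  have hbdd : BddAbove {k | k ≤ m ∧ ∀ k' ≤ m, f k ≤ f k'} := ⟨m, fun k hk => hk.1⟩
  have hne : {k | k ≤ m ∧ ∀ k' ≤ m, f k ≤ f k'}.Nonempty := by
    obtain ⟨k, hk, hmin⟩ := Finset.exists_min_image (Finset.range (m + 1)) f ⟨0, by simp⟩
    exact ⟨k, Nat.lt_succ_iff.mp (Finset.mem_range.mp hk),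
      fun k' hk' => hmin k' (Finset.mem_range.mpr (Nat.lt_succ_of_le hk'))⟩
  exact Nat.sSup_mem hne hbdd

lemma le_maxArgmin' (m : ℕ) (f : ℕ → ℝ) {k : ℕ} (hk : k ≤ m)
    (hmin : ∀ k' ≤ m, f k ≤ f k') : k ≤ maxArgmin m f :=
  le_csSup ⟨m, fun k hk => hk.1⟩ (Set.mem_setOf.mpr ⟨hk, hmin⟩)

lemma pval_pos (n : ℕ) (s : ℕ → ℝ) (i : ℕ) : 0 < pval n s i := by
  unfold pval
  positivity

lemma pval_mono' (n : ℕ) (s : ℕ → ℝ) {i i' : ℕ} (h : s (n + i') ≤ s (n + i)) :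
    pval n s i ≤ pval n s i' := by
  unfold pval
  have hsub : (Finset.Icc 1 n).filter (fun j => s (n + i) ≤ s j)
      ⊆ (Finset.Icc 1 n).filter (fun j => s (n + i') ≤ s j) := by
    intro j hj
    rw [Finset.mem_filter] at hj ⊢
    exact ⟨hj.1, le_trans h hj.2⟩
  have hc : ((((Finset.Icc 1 n)).filter (fun j => s (n + i) ≤ s j)).card : ℝ)
      ≤ ((((Finset.Icc 1 n)).filter (fun j => s (n + i') ≤ s j)).card : ℝ) := by
    exact_mod_cast Finset.card_le_card hsub
  gcongr

lemma pval_num (n : ℕ) (s : ℕ → ℝ) (i : ℕ) :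
    ∃ c : ℕ, 1 ≤ c ∧ c ≤ n + 1 ∧ pval n s i = (c : ℝ) / (n + 1) := by
  refine ⟨1 + (((Finset.Icc 1 n)).filter (fun j => s (n + i) ≤ s j)).card,
    Nat.le_add_right 1 _, ?_, ?_⟩
  · have h1 : (((Finset.Icc 1 n)).filter (fun j => s (n + i) ≤ s j)).card ≤ n := by
      calc _ ≤ (Finset.Icc 1 n).card := Finset.card_filter_le _ _
        _ = n := by rw [Nat.card_Icc]; omega
    omega
  · unfold pval
    push_cast
    ring

/-- Lemma B.2 of the paper, non-adaptive part: with
`ℓ̂ = max argmin_{ℓ ∈ {0,…,n+1}} (ℓ/(n+1) − (α/m)·#{j : p_j ≤ ℓ/(n+1)})`,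
if the last SL rejection is test point `i` then `p_i = ℓ̂/(n+1)`; moreover
`ℓ̂ ≤ ⌊α(n+1)⌋`. -/
theorem khatSL_pvalue_eq_lhat
    (n m : ℕ) (hn : 1 ≤ n) (hm : 1 ≤ m)
    (s : ℕ → ℝ) (hdist : Set.InjOn s (Finset.Icc 1 (n + m)))
    (σ : ℕ → ℕ) (hσ : SortsTest n m s σ)
    (α : ℝ) (hα : α ∈ Set.Ioo (0 : ℝ) 1) :
    (∀ i ∈ Finset.Icc 1 m, σ (khatSL n m α s σ) = i →
      pval n s i
        = ((maxArgmin (n + 1) (fun ℓ => (ℓ : ℝ) / (n + 1)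
            - α / m * ((Finset.Icc 1 m).filter
                (fun j => pval n s j ≤ (ℓ : ℝ) / (n + 1))).card) : ℕ) : ℝ) / (n + 1))
      ∧
    maxArgmin (n + 1) (fun ℓ => (ℓ : ℝ) / (n + 1)
        - α / m * ((Finset.Icc 1 m).filter
            (fun j => pval n s j ≤ (ℓ : ℝ) / (n + 1))).card)
      ≤ Nat.floor (α * ((n : ℝ) + 1)) := by
  obtain ⟨hα0, hα1⟩ := hα
  have hn1 : (0 : ℝ) < (n : ℝ) + 1 := by positivity
  have hm0 : (0 : ℝ) < (m : ℝ) := by exact_mod_cast Nat.lt_of_lt_of_le Nat.zero_lt_one hm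
  have hαm : (0 : ℝ) ≤ α / m := le_of_lt (div_pos hα0 hm0)
  obtain ⟨hσ0, hσbij, hσsort⟩ := hσ
  set Nf : ℕ → ℕ := fun ℓ => ((Finset.Icc 1 m).filter
      (fun j => pval n s j ≤ (ℓ : ℝ) / (n + 1))).card with hNf
  set G : ℕ → ℝ := fun ℓ => (ℓ : ℝ) / (n + 1)
      - α / m * ((Finset.Icc 1 m).filter
          (fun j => pval n s j ≤ (ℓ : ℝ) / (n + 1))).card with hGdef
  have hGN : ∀ ℓ : ℕ, G ℓ = (ℓ : ℝ) / (n + 1) - α / m * (Nf ℓ : ℝ) := by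
    intro ℓ; rw [hGdef, hNf]
  set F : ℕ → ℝ := fun k => pOrd n s σ k - α * k / m with hFdef
  have hKS : khatSL n m α s σ = maxArgmin m F := by rw [hFdef]; rfl
  set K : ℕ := maxArgmin m F with hKdef
  set L : ℕ := maxArgmin (n + 1) G with hLdef
  obtain ⟨hKm, hKmin⟩ := maxArgmin_mem' m F
  obtain ⟨hLn, hLmin⟩ := maxArgmin_mem' (n + 1) G
  rw [← hKdef] at hKm hKmin
  rw [← hLdef] at hLn hLmin
  -- basic facts about Nf
  have hNle : ∀ ℓ : ℕ, Nf ℓ ≤ m := by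
    intro ℓ
    calc Nf ℓ ≤ (Finset.Icc 1 m).card := Finset.card_filter_le _ _
      _ = m := by rw [Nat.card_Icc]; omega
  have hNmono : ∀ ℓ ℓ' : ℕ, ℓ ≤ ℓ' → Nf ℓ ≤ Nf ℓ' := by
    intro ℓ ℓ' h
    apply Finset.card_le_card
    intro j hj
    rw [Finset.mem_filter] at hj ⊢
    refine ⟨hj.1, le_trans hj.2 ?_⟩
    have hc : (ℓ : ℝ) ≤ (ℓ' : ℝ) := by exact_mod_cast h
    gcongr
  have hN0 : Nf 0 = 0 := by
    show ((Finset.Icc 1 m).filter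
        (fun j => pval n s j ≤ (((0 : ℕ) : ℝ)) / (n + 1))).card = 0
    rw [Finset.card_eq_zero, Finset.filter_eq_empty_iff]
    intro j _
    push_cast
    rw [zero_div]
    exact not_le.mpr (pval_pos n s j)
  -- monotonicity of pOrd
  have hPmono : ∀ k k' : ℕ, 1 ≤ k → k ≤ k' → k' ≤ m →
      pOrd n s σ k ≤ pOrd n s σ k' := by
    intro k k' h1 hkk' hk'm
    have hk0 : k ≠ 0 := by omega
    have hk'0 : k' ≠ 0 := by omega
    rw [pOrd, pOrd, if_neg hk0, if_neg hk'0]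
    rcases eq_or_lt_of_le hkk' with h | h
    · rw [h]
    · exact pval_mono' n s (le_of_lt (hσsort k (Finset.mem_Icc.mpr ⟨h1, by omega⟩)
        k' (Finset.mem_Icc.mpr ⟨by omega, hk'm⟩) h))
  -- claim (a)
  have claimA : ∀ k : ℕ, 1 ≤ k → k ≤ m → ∀ ℓ : ℕ,
      pOrd n s σ k ≤ (ℓ : ℝ) / (n + 1) → k ≤ Nf ℓ := by
    intro k h1 hkm ℓ hle
    have : (Finset.Icc 1 k).card ≤ ((Finset.Icc 1 m).filter
        (fun j => pval n s j ≤ (ℓ : ℝ) / (n + 1))).card := by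
      apply Finset.card_le_card_of_injOn σ
      · intro t ht
        obtain ⟨ht1, htk⟩ := Finset.mem_Icc.mp ht
        have htm : t ∈ Finset.Icc 1 m := Finset.mem_Icc.mpr ⟨ht1, by omega⟩
        refine Finset.mem_filter.mpr ⟨?_, ?_⟩
        · exact_mod_cast hσbij.mapsTo (Finset.mem_coe.mpr htm)
        · have : pval n s (σ t) = pOrd n s σ t := by
            rw [pOrd, if_neg (by omega : t ≠ 0)]
          rw [this]
          exact le_trans (hPmono t k ht1 htk hkm) hle
      · exact hσbij.injOn.mono (by
          intro t ht
          obtain ⟨ht1, htk⟩ := Finset.mem_Icc.mp (Finset.mem_coe.mp ht)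
          exact Finset.mem_coe.mpr (Finset.mem_Icc.mpr ⟨ht1, by omega⟩))
    rwa [Nat.card_Icc, Nat.add_sub_cancel] at this
  -- claim (b)
  have claimB : ∀ ℓ : ℕ, pOrd n s σ (Nf ℓ) ≤ (ℓ : ℝ) / (n + 1) := by
    intro ℓ
    rcases Nat.eq_zero_or_pos (Nf ℓ) with h0 | hpos
    · rw [h0, pOrd, if_pos rfl]; positivity
    · set Fs := (Finset.Icc 1 m).filter (fun j => pval n s j ≤ (ℓ : ℝ) / (n + 1)) with hFs
      set T := (Finset.Icc 1 m).filter (fun t => σ t ∈ Fs) with hT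
      have hcardT : T.card = Fs.card := by
        apply Finset.card_bij (fun t _ => σ t)
        · intro t ht; exact (Finset.mem_filter.mp ht).2
        · intro t1 h1 t2 h2 he
          exact hσbij.injOn (Finset.mem_coe.mpr (Finset.mem_filter.mp h1).1)
            (Finset.mem_coe.mpr (Finset.mem_filter.mp h2).1) he
        · intro j hj
          have hjm : j ∈ Finset.Icc 1 m := Finset.mem_filter.mp hj |>.1
          obtain ⟨t, htm, hte⟩ := hσbij.surjOn (Finset.mem_coe.mpr hjm)
          exact ⟨t, Finset.mem_filter.mpr ⟨Finset.mem_coe.mp htm, by rw [hte]; exact hj⟩, hte⟩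
      have hcard : T.card = Nf ℓ := by rw [hcardT, hNf, hFs]
      have hex : ∃ t ∈ T, Nf ℓ ≤ t := by
        by_contra hcon
        push_neg at hcon
        have hsub : T ⊆ Finset.Icc 1 (Nf ℓ - 1) := by
          intro t ht
          have htm := Finset.mem_Icc.mp (Finset.mem_filter.mp ht).1
          have := hcon t ht
          exact Finset.mem_Icc.mpr ⟨htm.1, by omega⟩
        have := Finset.card_le_card hsub
        rw [hcard, Nat.card_Icc] at this
        omega
      obtain ⟨t, htT, htN⟩ := hex
      have htmem := Finset.mem_Icc.mp (Finset.mem_filter.mp htT).1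
      have hσt : σ t ∈ Fs := (Finset.mem_filter.mp htT).2
      have hpt : pOrd n s σ t ≤ (ℓ : ℝ) / (n + 1) := by
        rw [pOrd, if_neg (by omega : t ≠ 0)]
        exact (Finset.mem_filter.mp hσt).2
      exact le_trans (hPmono (Nf ℓ) t hpos htN htmem.2) hpt
  -- F (Nf ℓ) ≤ G ℓ
  have lemFG : ∀ ℓ : ℕ, F (Nf ℓ) ≤ G ℓ := by
    intro ℓ
    rw [hGN ℓ, hFdef]
    have h1 : α * (Nf ℓ : ℝ) / m = α / m * (Nf ℓ : ℝ) := by ring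
    simp only [h1]
    exact sub_le_sub_right (claimB ℓ) _
  constructor
  · -- Part 1
    intro i hi hσK
    rw [hKS] at hσK
    obtain ⟨hi1, him⟩ := Finset.mem_Icc.mp hi
    have hK0 : K ≠ 0 := by
      intro h
      rw [h, hσ0] at hσK
      omega
    have hK1 : 1 ≤ K := Nat.one_le_iff_ne_zero.mpr hK0
    obtain ⟨c, hc1, hcn, hceq⟩ := pval_num n s (σ K)
    have hPK : pOrd n s σ K = (c : ℝ) / (n + 1) := by
      rw [pOrd, if_neg hK0, hceq]
    have hKNc : K ≤ Nf c := claimA K hK1 hKm c (le_of_eq hPK)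
    have hFK : F K = (c : ℝ) / (n + 1) - α / m * (K : ℝ) := by
      rw [hFdef]; simp only []; rw [hPK]; ring
    have hgc_le_fK : G c ≤ F K := by
      rw [hGN c, hFK]
      apply sub_le_sub_left
      exact mul_le_mul_of_nonneg_left (by exact_mod_cast hKNc) hαm
    have hGmin_at_c : ∀ ℓ' ≤ n + 1, G c ≤ G ℓ' := by
      intro ℓ' _
      exact le_trans hgc_le_fK (le_trans (hKmin (Nf ℓ') (hNle ℓ')) (lemFG ℓ'))
    have hcL : c ≤ L := by
      rw [hLdef]
      exact le_maxArgmin' (n + 1) G hcn hGmin_at_c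
    have hLc : L ≤ c := by
      by_contra hcon
      push_neg at hcon
      have hNLmin : ∀ k' ≤ m, F (Nf L) ≤ F k' := by
        intro k' hk'
        calc F (Nf L) ≤ G L := lemFG L
          _ ≤ G c := hLmin c hcn
          _ ≤ F K := hgc_le_fK
          _ ≤ F k' := hKmin k' hk'
      have hNLK : Nf L ≤ K := by
        rw [hKdef]
        exact le_maxArgmin' m F (hNle L) hNLmin
      have hNeq : Nf L = Nf c :=
        le_antisymm (le_trans hNLK hKNc) (hNmono c L (le_of_lt hcon))
      have hlt : G c < G L := by
        rw [hGN c, hGN L, hNeq]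
        have hcast : (c : ℝ) < (L : ℝ) := by exact_mod_cast hcon
        have : (c : ℝ) / (n + 1) < (L : ℝ) / (n + 1) := by gcongr
        linarith
      exact absurd (hLmin c hcn) (not_le.mpr hlt)
    have hLceq : L = c := le_antisymm hLc hcL
    rw [hLceq]
    rw [← hσK, ← hceq]
  · -- Part 2
    have hG0 : G 0 = 0 := by
      rw [hGN 0, hN0]
      norm_num
    have hGL : G L ≤ 0 := by
      rw [← hG0]
      exact hLmin 0 (by omega)
    rw [hGN L] at hGL
    have h1 : α / m * (Nf L : ℝ) ≤ α := by
      calc α / m * (Nf L : ℝ) ≤ α / m * (m : ℝ) := by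
            exact mul_le_mul_of_nonneg_left (by exact_mod_cast hNle L) hαm
        _ = α := by field_simp
    have h2 : (L : ℝ) / (n + 1) ≤ α := by linarith
    have h3 : (L : ℝ) ≤ α * ((n : ℝ) + 1) := by
      rw [div_le_iff₀ hn1] at h2
      linarith
    exact Nat.le_floor h3

end
end

section
/- Under Assumption (A1), for every fixed i ∈ H0: the random variable (n+1)·p_i is uniformly distributed on {1,…,n+1}, and it is independent of W_i := ((a_{i,(1)},…,a_{i,(n+1)}), (S_{n+j})_{j ∈ {1,…,m}∖{i}}), where a_{i,(1)} > ⋯ > a_{i,(n+1)} are the decreasingly ordered values of the multiset {S_1,…,S_n, S_{n+i}}. -/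
open MeasureTheory Finset

noncomputable section

attribute [local instance] Classical.propDecidable

namespace ConformalAux

def Kf (n i : ℕ) : Finset ℕ := Finset.Icc 1 n ∪ {n + i}

def rk (n i : ℕ) (s : ℕ → ℝ) (c : ℕ) : ℕ :=
  1 + (((Kf n i).erase c).filter (fun j => s c ≤ s j)).card

def sortval (n i : ℕ) (s : ℕ → ℝ) (l : ℕ) : ℝ :=
  ∑ c ∈ Kf n i, if rk n i s c = l then s c else 0

variable {n i : ℕ}

lemma top_not_mem (hi : 1 ≤ i) : n + i ∉ Finset.Icc 1 n := by
  simp only [Finset.mem_Icc, not_and]; omega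

lemma top_mem : n + i ∈ Kf n i := Finset.mem_union_right _ (Finset.mem_singleton_self _)

lemma coe_Kf : (Kf n i : Set ℕ) = (Finset.Icc 1 n : Set ℕ) ∪ {n + i} := by
  simp [Kf]

lemma card_Kf (hi : 1 ≤ i) : (Kf n i).card = n + 1 := by
  rw [Kf, Finset.card_union_of_disjoint (by
    simp [Finset.disjoint_singleton_right, top_not_mem hi])]
  simp

lemma erase_Kf (hi : 1 ≤ i) : (Kf n i).erase (n + i) = Finset.Icc 1 n := by
  rw [Kf, Finset.union_comm, ← Finset.insert_eq, Finset.erase_insert (top_not_mem hi)]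

lemma rk_top (hi : 1 ≤ i) (s : ℕ → ℝ) :
    rk n i s (n + i) = 1 + ((Finset.Icc 1 n).filter (fun j => s (n + i) ≤ s j)).card := by
  rw [rk, erase_Kf hi]

lemma image_swap {c : ℕ} (hc : c ∈ Kf n i) :
    (Kf n i).image (Equiv.swap c (n + i)) = Kf n i := by
  have h := Finset.map_perm (s := Kf n i) (σ := Equiv.swap c (n + i)) ?_
  · simpa [Finset.map_eq_image] using h
  · intro a ha
    simp only [Set.mem_setOf_eq] at ha
    rcases (Equiv.swap_apply_ne_self_iff).1 ha with ⟨_, h | h⟩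
    · subst h; exact hc
    · subst h; exact top_mem

lemma rk_comp_perm (τ : Equiv.Perm ℕ) (hτ : (Kf n i).image τ = Kf n i)
    (s : ℕ → ℝ) (c : ℕ) :
    rk n i (fun j => s (τ j)) c = rk n i s (τ c) := by
  rw [rk, rk]
  congr 1
  have h3 : ((Kf n i).erase c).image τ = (Kf n i).erase (τ c) := by
    rw [Finset.image_erase τ.injective, hτ]
  have h2 : ((((Kf n i).erase c).image τ).filter (fun x => s (τ c) ≤ s x))
      = (((Kf n i).erase c).filter (fun j => s (τ c) ≤ s (τ j))).image τ :=
    Finset.filter_image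
  rw [← h3, h2, Finset.card_image_of_injective _ τ.injective]

lemma sortval_comp_perm (τ : Equiv.Perm ℕ) (hτ : (Kf n i).image τ = Kf n i)
    (s : ℕ → ℝ) (l : ℕ) :
    sortval n i (fun j => s (τ j)) l = sortval n i s l := by
  rw [sortval, sortval,
    show (∑ c ∈ Kf n i, if rk n i s c = l then s c else 0)
      = ∑ c ∈ (Kf n i).image τ, (if rk n i s c = l then s c else 0) by rw [hτ]]
  rw [Finset.sum_image (fun a _ b _ h => τ.injective h)]
  exact Finset.sum_congr rfl fun c _ => by rw [rk_comp_perm τ hτ]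

lemma rk_lt_rk {s : ℕ → ℝ} {c c' : ℕ}
    (hc : c ∈ Kf n i) (hc' : c' ∈ Kf n i) (h : s c < s c') :
    rk n i s c' < rk n i s c := by
  have hne : c ≠ c' := fun h' => absurd rfl (by rw [h'] at h; exact h.ne)
  apply Nat.add_lt_add_left
  apply Finset.card_lt_card
  rw [Finset.ssubset_iff_of_subset]
  · refine ⟨c', Finset.mem_filter.2 ⟨Finset.mem_erase.2 ⟨hne.symm, hc'⟩, h.le⟩, ?_⟩
    intro hcon
    exact absurd (Finset.mem_of_mem_filter _ hcon) (Finset.notMem_erase _ _)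
  · intro j hj
    rw [Finset.mem_filter] at hj ⊢
    obtain ⟨hj1, hj2⟩ := hj
    have hjK := Finset.mem_of_mem_erase hj1
    refine ⟨Finset.mem_erase.2 ⟨?_, hjK⟩, le_trans h.le hj2⟩
    intro hjc; subst hjc
    exact absurd hj2 (not_le.2 h)

lemma rk_injOn {s : ℕ → ℝ} {c c' : ℕ}
    (hdist : ∀ a ∈ Kf n i, ∀ b ∈ Kf n i, a ≠ b → s a ≠ s b)
    (hc : c ∈ Kf n i) (hc' : c' ∈ Kf n i) (h : rk n i s c = rk n i s c') : c = c' := by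
  by_contra hne
  rcases lt_trichotomy (s c) (s c') with hlt | heq | hlt
  · exact absurd h (rk_lt_rk hc hc' hlt).ne'
  · exact hdist c hc c' hc' hne heq
  · exact absurd h (rk_lt_rk hc' hc hlt).ne

lemma rk_enum (hi : 1 ≤ i) {s : ℕ → ℝ} {e : ℕ → ℕ}
    (he : Set.BijOn e (Finset.Icc 1 (n + 1) : Set ℕ) (Kf n i : Set ℕ))
    (hdist : ∀ a ∈ Kf n i, ∀ b ∈ Kf n i, a ≠ b → s a ≠ s b)
    (hant : ∀ l ∈ Finset.Icc 1 (n + 1), ∀ l' ∈ Finset.Icc 1 (n + 1), l ≤ l' → s (e l') ≤ s (e l))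
    {l : ℕ} (hl : l ∈ Finset.Icc 1 (n + 1)) : rk n i s (e l) = l := by
  obtain ⟨hl1, hl2⟩ := Finset.mem_Icc.1 hl
  have hlset : l ∈ (Finset.Icc 1 (n + 1) : Set ℕ) := Finset.mem_coe.2 hl
  have helK : e l ∈ Kf n i := Finset.mem_coe.1 (he.mapsTo hlset)
  have key : ((Kf n i).erase (e l)).filter (fun j => s (e l) ≤ s j)
      = (Finset.Ico 1 l).image e := by
    ext j
    simp only [Finset.mem_filter, Finset.mem_erase, Finset.mem_image, Finset.mem_Ico]
    constructor
    · rintro ⟨⟨hje, hjK⟩, hsle⟩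
      obtain ⟨l', hl', rfl⟩ := he.surjOn (Finset.mem_coe.2 hjK)
      have hl'icc : l' ∈ Finset.Icc 1 (n + 1) := Finset.mem_coe.1 hl'
      obtain ⟨h1', h2'⟩ := Finset.mem_Icc.1 hl'icc
      refine ⟨l', ⟨h1', ?_⟩, rfl⟩
      rcases lt_or_ge l' l with hlt | hge
      · exact hlt
      · exfalso
        have hle2 : s (e l') ≤ s (e l) := hant l hl l' hl'icc hge
        have hne : e l' ≠ e l := hje
        exact hdist _ (Finset.mem_coe.1 (he.mapsTo hl')) _ helK hne (le_antisymm hle2 hsle)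
    · rintro ⟨l', ⟨h1', h2'⟩, rfl⟩
      have hl'icc : l' ∈ Finset.Icc 1 (n + 1) := Finset.mem_Icc.2 ⟨h1', by omega⟩
      refine ⟨⟨?_, Finset.mem_coe.1 (he.mapsTo (Finset.mem_coe.2 hl'icc))⟩,
        hant l' hl'icc l hl (le_of_lt h2')⟩
      intro hcon
      exact absurd (he.injOn (Finset.mem_coe.2 hl'icc) hlset hcon) (Nat.ne_of_lt h2')
  rw [rk, key, Finset.card_image_of_injOn, Nat.card_Ico]
  · omega
  · intro x hx y hy hxy
    have hx' : x ∈ Finset.Icc 1 (n + 1) := by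
      rw [Finset.mem_coe, Finset.mem_Ico] at hx; exact Finset.mem_Icc.2 ⟨hx.1, by omega⟩
    have hy' : y ∈ Finset.Icc 1 (n + 1) := by
      rw [Finset.mem_coe, Finset.mem_Ico] at hy; exact Finset.mem_Icc.2 ⟨hy.1, by omega⟩
    exact he.injOn (Finset.mem_coe.2 hx') (Finset.mem_coe.2 hy') hxy

lemma sortval_enum (hi : 1 ≤ i) {s : ℕ → ℝ} {e : ℕ → ℕ}
    (he : Set.BijOn e (Finset.Icc 1 (n + 1) : Set ℕ) (Kf n i : Set ℕ))
    (hdist : ∀ a ∈ Kf n i, ∀ b ∈ Kf n i, a ≠ b → s a ≠ s b)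
    (hant : ∀ l ∈ Finset.Icc 1 (n + 1), ∀ l' ∈ Finset.Icc 1 (n + 1), l ≤ l' → s (e l') ≤ s (e l))
    {l : ℕ} (hl : l ∈ Finset.Icc 1 (n + 1)) : sortval n i s l = s (e l) := by
  have hlset : l ∈ (Finset.Icc 1 (n + 1) : Set ℕ) := Finset.mem_coe.2 hl
  have helK : e l ∈ Kf n i := Finset.mem_coe.1 (he.mapsTo hlset)
  rw [sortval, Finset.sum_eq_single_of_mem (e l) helK]
  · rw [if_pos (rk_enum hi he hdist hant hl)]
  · intro c hc hne
    rw [if_neg]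
    intro hrk
    exact hne (rk_injOn hdist hc helK (hrk.trans (rk_enum hi he hdist hant hl).symm))

lemma measurable_rk (c : ℕ) : Measurable (fun s : ℕ → ℝ => rk n i s c) := by
  have h : (fun s : ℕ → ℝ => rk n i s c)
      = fun s => 1 + ∑ j ∈ (Kf n i).erase c, if s c ≤ s j then 1 else 0 := by
    funext s; rw [rk, Finset.card_filter]
  rw [h]
  apply Measurable.add measurable_const
  apply Finset.measurable_sum
  intro j _
  exact Measurable.ite (measurableSet_le (measurable_pi_apply c) (measurable_pi_apply j))
    measurable_const measurable_const

lemma measurable_sortval (l : ℕ) : Measurable (fun s : ℕ → ℝ => sortval n i s l) := by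
  have h : (fun s : ℕ → ℝ => sortval n i s l)
      = fun s => ∑ c ∈ Kf n i, if rk n i s c = l then s c else 0 := rfl
  rw [h]
  apply Finset.measurable_sum
  intro c _
  apply Measurable.ite ?_ (measurable_pi_apply c) measurable_const
  exact (measurable_rk c) (measurableSet_singleton l)

end ConformalAux

/-- Lemma B.3 of the paper: under Assumption (A1), for a
fixed null index `i ∈ H0`, the random variable `(n+1)·p_i` is uniform on
`{1,…,n+1}` and independent of
`W_i = ((a_{i,(1)},…,a_{i,(n+1)}), (S_{n+j})_{j≠i})`, where
`a_{i,(1)} > ⋯ > a_{i,(n+1)}` are the decreasingly ordered values of the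
multiset `{S_1,…,S_n, S_{n+i}}` (the function `a ω` below, extended by `0`
outside `{1,…,n+1}`, and `(S_{n+j})_{j≠i}` extended by `0` outside
`{1,…,m}∖{i}`). -/
theorem pval_uniform_and_indep
    {Ω : Type*} [MeasurableSpace Ω] (μ : Measure Ω) [IsProbabilityMeasure μ]
    (n m : ℕ) (hn : 1 ≤ n) (hm : 1 ≤ m)
    (S : Ω → ℕ → ℝ) (hS : Measurable S)
    (H0 : Finset ℕ) (hH0 : H0 ⊆ Finset.Icc 1 m)
    (hexch : ExchangeableNulls μ n H0 S)
    (hdist : ∀ᵐ ω ∂μ, Set.InjOn (S ω) (Finset.Icc 1 (n + m)))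
    (i : ℕ) (hi : i ∈ H0)
    (a : Ω → ℕ → ℝ)
    (ha : ∀ ω, (∃ e : ℕ → ℕ,
        Set.BijOn e (Finset.Icc 1 (n + 1)) ((Finset.Icc 1 n : Set ℕ) ∪ {n + i})
          ∧ ∀ l ∈ Finset.Icc 1 (n + 1), a ω l = S ω (e l))
        ∧ AntitoneOn (a ω) (Finset.Icc 1 (n + 1))) :
    ∀ ℓ ∈ Finset.Icc 1 (n + 1),
      (μ {ω | pval n (S ω) i = (ℓ : ℝ) / (n + 1)} = ((n : ENNReal) + 1)⁻¹)
        ∧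
      (∀ E : Set ((ℕ → ℝ) × (ℕ → ℝ)), MeasurableSet E →
        μ ({ω | pval n (S ω) i = (ℓ : ℝ) / (n + 1)}
            ∩ {ω | ((fun l => if l ∈ Finset.Icc 1 (n + 1) then a ω l else 0),
                    (fun j => if j ∈ (Finset.Icc 1 m).erase i then S ω (n + j) else 0)) ∈ E})
          = ((n : ENNReal) + 1)⁻¹
            * μ {ω | ((fun l => if l ∈ Finset.Icc 1 (n + 1) then a ω l else 0),
                      (fun j => if j ∈ (Finset.Icc 1 m).erase i then S ω (n + j) else 0)) ∈ E}) := by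
  obtain ⟨hi1, him⟩ := Finset.mem_Icc.1 (hH0 hi)
  intro ℓ hℓ
  obtain ⟨hℓ1, hℓ2⟩ := Finset.mem_Icc.1 hℓ
  -- the "W" map as a measurable function of the scores
  set w : (ℕ → ℝ) → (ℕ → ℝ) × (ℕ → ℝ) := fun s =>
    (fun l => if l ∈ Finset.Icc 1 (n + 1) then ConformalAux.sortval n i s l else 0,
     fun j => if j ∈ (Finset.Icc 1 m).erase i then s (n + j) else 0) with hw_def
  have hw : Measurable w := by
    apply Measurable.prodMk
    · apply measurable_pi_lambda
      intro l
      by_cases h : l ∈ Finset.Icc 1 (n + 1)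
      · simpa only [h, if_true] using ConformalAux.measurable_sortval (n := n) (i := i) l
      · simpa only [h, if_false] using (measurable_const : Measurable fun _ : ℕ → ℝ => (0 : ℝ))
    · apply measurable_pi_lambda
      intro j
      by_cases h : j ∈ (Finset.Icc 1 m).erase i
      · simpa only [h, if_true] using measurable_pi_apply (n + j)
      · simpa only [h, if_false] using (measurable_const : Measurable fun _ : ℕ → ℝ => (0 : ℝ))
  have hKsub : ∀ c ∈ ConformalAux.Kf n i, c ∈ NullIdx n H0 := by
    intro c hc
    rcases Finset.mem_union.1 hc with h | h
    · exact Finset.mem_union_left _ h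
    · rw [Finset.mem_singleton] at h
      subst h
      exact Finset.mem_union_right _ (Finset.mem_image.2 ⟨i, hi, rfl⟩)
  have hKIcc : ∀ c ∈ ConformalAux.Kf n i, c ∈ Finset.Icc 1 (n + m) := by
    intro c hc
    rcases Finset.mem_union.1 hc with h | h
    · rw [Finset.mem_Icc] at h ⊢; omega
    · rw [Finset.mem_singleton] at h; subst h; rw [Finset.mem_Icc]; omega
  -- the distinctness set
  set D : Set (ℕ → ℝ) :=
    {s | ∀ a ∈ ConformalAux.Kf n i, ∀ b ∈ ConformalAux.Kf n i, a ≠ b → s a ≠ s b} with hD_def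
  have hDmeas : MeasurableSet D := by
    have hD2 : D = ⋂ x ∈ ConformalAux.Kf n i, ⋂ y ∈ ConformalAux.Kf n i,
        {s : ℕ → ℝ | x ≠ y → s x ≠ s y} := by
      ext s
      simp only [hD_def, Set.mem_setOf_eq, Set.mem_iInter]
    rw [hD2]
    refine MeasurableSet.biInter (Finset.countable_toSet _) fun x _ =>
      MeasurableSet.biInter (Finset.countable_toSet _) fun y _ => ?_
    by_cases hxy : x = y
    · simp [hxy]
    · have : {s : ℕ → ℝ | x ≠ y → s x ≠ s y} = {s : ℕ → ℝ | s x = s y}ᶜ := by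
        ext s; simp [hxy]
      rw [this]
      exact (measurableSet_eq_fun (measurable_pi_apply x) (measurable_pi_apply y)).compl
  have hDae : ∀ᵐ ω ∂μ, S ω ∈ D := by
    filter_upwards [hdist] with ω hω
    intro x hx y hy hxy h
    exact hxy (hω (Finset.mem_coe.2 (hKIcc x hx)) (Finset.mem_coe.2 (hKIcc y hy)) h)
  -- the key claim
  have key : ∀ E : Set ((ℕ → ℝ) × (ℕ → ℝ)), MeasurableSet E →
      μ {ω | ConformalAux.rk n i (S ω) (n + i) = ℓ ∧ w (S ω) ∈ E}
        = ((n : ENNReal) + 1)⁻¹ * μ {ω | w (S ω) ∈ E} := by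
    intro E hE
    set A : ℕ → Set Ω :=
      fun c => {ω | ConformalAux.rk n i (S ω) c = ℓ ∧ w (S ω) ∈ E ∧ S ω ∈ D} with hA_def
    have hGmeas : ∀ c,
        MeasurableSet {s : ℕ → ℝ | ConformalAux.rk n i s c = ℓ ∧ w s ∈ E ∧ s ∈ D} := by
      intro c
      refine MeasurableSet.inter ?_ (MeasurableSet.inter (hw hE) hDmeas)
      exact (ConformalAux.measurable_rk c) (measurableSet_singleton ℓ)
    have hAmeas : ∀ c, MeasurableSet (A c) := fun c => hS (hGmeas c)
    have claim1 : ∀ c ∈ ConformalAux.Kf n i, μ (A c) = μ (A (n + i)) := by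
      intro c hc
      set τ := Equiv.swap c (n + i) with hτ_def
      have hτK : (ConformalAux.Kf n i).image τ = ConformalAux.Kf n i :=
        ConformalAux.image_swap hc
      have hfix : ∀ j ∉ NullIdx n H0, τ j = j := by
        intro j hj
        apply Equiv.swap_apply_of_ne_of_ne
        · intro h; subst h; exact hj (hKsub _ hc)
        · intro h; subst h; exact hj (hKsub _ ConformalAux.top_mem)
      have hmap := hexch τ hfix
      have hT : Measurable (fun ω => fun j => S ω (τ j)) :=
        measurable_pi_lambda _ fun j => (measurable_pi_apply (τ j)).comp hS
      set G := {s : ℕ → ℝ | ConformalAux.rk n i s (n + i) = ℓ ∧ w s ∈ E ∧ s ∈ D} with hG_def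
      have h1 : μ ((fun ω => fun j => S ω (τ j)) ⁻¹' G) = μ (S ⁻¹' G) := by
        rw [← Measure.map_apply hT (hGmeas _), ← Measure.map_apply hS (hGmeas _), hmap]
      have hDiff : ∀ s : ℕ → ℝ, ((fun j => s (τ j)) ∈ D) ↔ s ∈ D := by
        intro s
        simp only [hD_def, Set.mem_setOf_eq]
        constructor
        · intro h x hx y hy hxy
          have hx' : τ x ∈ ConformalAux.Kf n i := by
            rw [← hτK]; exact Finset.mem_image.2 ⟨x, hx, rfl⟩
          have hy' : τ y ∈ ConformalAux.Kf n i := by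
            rw [← hτK]; exact Finset.mem_image.2 ⟨y, hy, rfl⟩
          have h2 := h _ hx' _ hy' (fun hc => hxy (τ.injective hc))
          simpa only [hτ_def, Equiv.swap_apply_self] using h2
        · intro h x hx y hy hxy
          apply h _ (by rw [← hτK]; exact Finset.mem_image.2 ⟨x, hx, rfl⟩)
            _ (by rw [← hτK]; exact Finset.mem_image.2 ⟨y, hy, rfl⟩)
          exact fun hc => hxy (τ.injective hc)
      have h2 : (fun ω => fun j => S ω (τ j)) ⁻¹' G = A c := by
        ext ω
        simp only [Set.mem_preimage, hG_def, Set.mem_setOf_eq, hA_def]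
        have e1 : ConformalAux.rk n i (fun j => S ω (τ j)) (n + i)
            = ConformalAux.rk n i (S ω) c := by
          rw [ConformalAux.rk_comp_perm τ hτK]
          congr 1
          exact Equiv.swap_apply_right c (n + i)
        have e2 : w (fun j => S ω (τ j)) = w (S ω) := by
          simp only [hw_def]
          refine Prod.ext ?_ ?_
          · funext l
            by_cases h : l ∈ Finset.Icc 1 (n + 1)
            · simp only [h, if_true]
              exact ConformalAux.sortval_comp_perm τ hτK (S ω) l
            · simp only [h, if_false]
          · funext j
            by_cases h : j ∈ (Finset.Icc 1 m).erase i
            · simp only [h, if_true]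
              congr 1
              apply Equiv.swap_apply_of_ne_of_ne
              · obtain ⟨hji, hjm⟩ := Finset.mem_erase.1 h
                rw [Finset.mem_Icc] at hjm
                intro hcon
                rcases Finset.mem_union.1 hc with hc' | hc'
                · rw [Finset.mem_Icc] at hc'; omega
                · rw [Finset.mem_singleton] at hc'; omega
              · obtain ⟨hji, hjm⟩ := Finset.mem_erase.1 h
                intro hcon
                exact hji (by omega)
            · simp only [h, if_false]
        rw [e1, e2]
        constructor
        · rintro ⟨x1, x2, x3⟩; exact ⟨x1, x2, (hDiff (S ω)).1 x3⟩
        · rintro ⟨x1, x2, x3⟩; exact ⟨x1, x2, (hDiff (S ω)).2 x3⟩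
      have h3 : S ⁻¹' G = A (n + i) := rfl
      rw [← h2, h1, h3]
    have hdisj : (ConformalAux.Kf n i : Set ℕ).PairwiseDisjoint A := by
      intro c hc c' hc' hne
      rw [Function.onFun, Set.disjoint_left]
      rintro ω ⟨h1, _, hD1⟩ ⟨h1', _, _⟩
      exact hne (ConformalAux.rk_injOn hD1 (Finset.mem_coe.1 hc) (Finset.mem_coe.1 hc')
        (h1.trans h1'.symm))
    have hunion : ⋃ c ∈ ConformalAux.Kf n i, A c = {ω | w (S ω) ∈ E ∧ S ω ∈ D} := by
      ext ω
      simp only [Set.mem_iUnion, hA_def, Set.mem_setOf_eq, exists_prop]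
      constructor
      · rintro ⟨c, _, _, h2, h3⟩; exact ⟨h2, h3⟩
      · rintro ⟨h2, h3⟩
        obtain ⟨⟨e, he, hae⟩, hant⟩ := ha ω
        have he' : Set.BijOn e (Finset.Icc 1 (n + 1) : Set ℕ) (ConformalAux.Kf n i : Set ℕ) := by
          rwa [ConformalAux.coe_Kf]
        have hant' : ∀ l ∈ Finset.Icc 1 (n + 1), ∀ l' ∈ Finset.Icc 1 (n + 1), l ≤ l' →
            S ω (e l') ≤ S ω (e l) := by
          intro l hl l' hl' hle
          rw [← hae l hl, ← hae l' hl']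
          exact hant (by simpa using hl) (by simpa using hl') hle
        refine ⟨e ℓ, Finset.mem_coe.1 (he'.mapsTo (Finset.mem_coe.2 hℓ)), ?_, h2, h3⟩
        exact ConformalAux.rk_enum hi1 he' h3 hant' hℓ
    have hsum : ∑ c ∈ ConformalAux.Kf n i, μ (A c) = μ {ω | w (S ω) ∈ E ∧ S ω ∈ D} := by
      rw [← measure_biUnion_finset hdisj (fun c _ => hAmeas c), hunion]
    have hconst : ∑ c ∈ ConformalAux.Kf n i, μ (A c)
        = ((n : ENNReal) + 1) * μ (A (n + i)) := by
      rw [Finset.sum_congr rfl claim1, Finset.sum_const, nsmul_eq_mul,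
        ConformalAux.card_Kf hi1]
      push_cast
      ring

    have hDright : μ {ω | w (S ω) ∈ E ∧ S ω ∈ D} = μ {ω | w (S ω) ∈ E} := by
      apply measure_congr
      rw [Filter.eventuallyEq_set]
      filter_upwards [hDae] with ω hω
      simp [hω]
    have hDleft : μ (A (n + i))
        = μ {ω | ConformalAux.rk n i (S ω) (n + i) = ℓ ∧ w (S ω) ∈ E} := by
      apply measure_congr
      rw [Filter.eventuallyEq_set]
      filter_upwards [hDae] with ω hω
      simp only [hA_def, Set.mem_setOf_eq, hω, and_true]
    have hne0 : ((n : ENNReal) + 1) ≠ 0 := by simp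
    have hnetop : ((n : ENNReal) + 1) ≠ ⊤ := by simp
    calc μ {ω | ConformalAux.rk n i (S ω) (n + i) = ℓ ∧ w (S ω) ∈ E}
        = μ (A (n + i)) := hDleft.symm
      _ = ((n : ENNReal) + 1)⁻¹ * (((n : ENNReal) + 1) * μ (A (n + i))) := by
          rw [← mul_assoc, ENNReal.inv_mul_cancel hne0 hnetop, one_mul]
      _ = ((n : ENNReal) + 1)⁻¹ * μ {ω | w (S ω) ∈ E} := by
          rw [← hconst, hsum, hDright]
  -- identification of the p-value event
  have hsetpval : {ω | pval n (S ω) i = (ℓ : ℝ) / (n + 1)}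
      = {ω | ConformalAux.rk n i (S ω) (n + i) = ℓ} := by
    ext ω
    simp only [Set.mem_setOf_eq, pval, ConformalAux.rk_top hi1]
    have hden : ((n : ℝ) + 1) ≠ 0 := by positivity
    constructor
    · intro h
      rw [div_eq_div_iff hden hden] at h
      have h2 := mul_right_cancel₀ hden h
      exact_mod_cast h2
    · intro h
      congr 1
      exact_mod_cast h
  -- identification of W with w ∘ S, almost everywhere
  have hWae : ∀ᵐ ω ∂μ,
      ((fun l => if l ∈ Finset.Icc 1 (n + 1) then a ω l else 0,
        fun j => if j ∈ (Finset.Icc 1 m).erase i then S ω (n + j) else 0)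
        : (ℕ → ℝ) × (ℕ → ℝ)) = w (S ω) := by
    filter_upwards [hDae] with ω hω
    simp only [hw_def]
    refine Prod.ext ?_ rfl
    funext l
    by_cases h : l ∈ Finset.Icc 1 (n + 1)
    · simp only [h, if_true]
      obtain ⟨⟨e, he, hae⟩, hant⟩ := ha ω
      have he' : Set.BijOn e (Finset.Icc 1 (n + 1) : Set ℕ) (ConformalAux.Kf n i : Set ℕ) := by
        rwa [ConformalAux.coe_Kf]
      have hant' : ∀ l ∈ Finset.Icc 1 (n + 1), ∀ l' ∈ Finset.Icc 1 (n + 1), l ≤ l' →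
          S ω (e l') ≤ S ω (e l) := by
        intro l hl l' hl' hle
        rw [← hae l hl, ← hae l' hl']
        exact hant (by simpa using hl) (by simpa using hl') hle
      rw [hae l h]
      exact (ConformalAux.sortval_enum hi1 he' hω hant' h).symm
    · simp only [h, if_false]
  constructor
  · -- uniformity
    have := key Set.univ MeasurableSet.univ
    simp only [Set.mem_univ, and_true] at this
    rw [hsetpval, this, Set.setOf_true, measure_univ, mul_one]
  · -- independence
    intro E hE
    have h1 : μ ({ω | pval n (S ω) i = (ℓ : ℝ) / (n + 1)}
        ∩ {ω | ((fun l => if l ∈ Finset.Icc 1 (n + 1) then a ω l else 0),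
                (fun j => if j ∈ (Finset.Icc 1 m).erase i then S ω (n + j) else 0)) ∈ E})
        = μ {ω | ConformalAux.rk n i (S ω) (n + i) = ℓ ∧ w (S ω) ∈ E} := by
      apply measure_congr
      rw [Filter.eventuallyEq_set]
      filter_upwards [hWae] with ω hω
      have hsp := Set.ext_iff.1 hsetpval ω
      simp only [Set.mem_inter_iff, Set.mem_setOf_eq] at hsp ⊢
      constructor
      · rintro ⟨hp, hq⟩; exact ⟨hsp.1 hp, hω ▸ hq⟩
      · rintro ⟨hp, hq⟩; exact ⟨hsp.2 hp, hω.symm ▸ hq⟩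
    have h2 : μ {ω | ((fun l => if l ∈ Finset.Icc 1 (n + 1) then a ω l else 0),
            (fun j => if j ∈ (Finset.Icc 1 m).erase i then S ω (n + j) else 0)) ∈ E}
        = μ {ω | w (S ω) ∈ E} := by
      apply measure_congr
      rw [Filter.eventuallyEq_set]
      filter_upwards [hWae] with ω hω
      simp only [Set.mem_setOf_eq, hω]
    rw [h1, h2, key E hE]

end
end

section
/- Let s_1,…,s_{n+m} be pairwise distinct reals, fix i ∈ {1,…,m}, ℓ ∈ {1,…,n+1} and α ∈ (0,1). Let a_(1) > ⋯ > a_(n+1) be the decreasingly ordered values of the multiset {s_1,…,s_n, s_{n+i}}, with a_(n+2) := −∞. For ℓ'' ∈ {1,…,n+1} and ℓ' ∈ {1,…,n+1}, define H_{ℓ''}(ℓ') = ℓ'/(n+1) − (α/m)·(1{ℓ'' ≤ ℓ'}·(1 + #{j ∈ {1,…,m}∖{i} : s_{n+j} ≥ a_(ℓ'+1)}) + 1{ℓ'' > ℓ'}·#{j ∈ {1,…,m}∖{i} : s_{n+j} ≥ a_(ℓ')}), with H_{ℓ''}(0) = 0, and let M_{ℓ''} = min_{ℓ' ∈ {0,…,n+1}}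 H_{ℓ''}(ℓ'). Suppose p_i = ℓ/(n+1) and σ(k̂_SL) = i. Then: (i) for all ℓ' ∈ {1,…,n+1}, H_ℓ(ℓ') = ℓ'/(n+1) − (α/m)·#{j ∈ {1,…,m} : p_j ≤ ℓ'/(n+1)}; (ii) ℓ is the maximum of the set argmin_{ℓ' ∈ {0,…,n+1}} H_ℓ(ℓ'); (iii) if ℓ ≥ 2, then M_ℓ − M_{ℓ−1} ≥ 1/(n+1). -/
open MeasureTheory Finset

noncomputable section

attribute [local instance] Classical.propDecidable

/-- The functional `H_{ℓ''}(ℓ')` of Lemma B.4 of the paper (for a fixed test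
point `i`, with `a` the decreasingly ordered values of `{s_1,…,s_n, s_{n+i}}`
and `a_{(n+2)} = −∞`, encoded via the vacuous guard `ℓ'+1 ≤ n+1`), with the
convention `H_{ℓ''}(0) = 0`. -/
def Hfun (n m : ℕ) (α : ℝ) (s : ℕ → ℝ) (i : ℕ) (a : ℕ → ℝ) (l'' l' : ℕ) : ℝ :=
  if l' = 0 then 0 else
    (l' : ℝ) / (n + 1) - α / m *
      (if l'' ≤ l' then
        1 + ((((Finset.Icc 1 m).erase i).filter
            (fun j => l' + 1 ≤ n + 1 → a (l' + 1) ≤ s (n + j))).card : ℝ)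
       else ((((Finset.Icc 1 m).erase i).filter
            (fun j => a l' ≤ s (n + j))).card : ℝ))

/-- `M_{ℓ''} = min_{ℓ' ∈ {0,…,n+1}} H_{ℓ''}(ℓ')`. -/
def Mfun (n m : ℕ) (α : ℝ) (s : ℕ → ℝ) (i : ℕ) (a : ℕ → ℝ) (l'' : ℕ) : ℝ :=
  (Finset.range (n + 2)).inf' Finset.nonempty_range_add_one
    (fun l' => Hfun n m α s i a l'' l')


private lemma cnt_ge_iff (N : ℕ) (a : ℕ → ℝ)
    (ha : ∀ l ∈ Finset.Icc 1 N, ∀ l' ∈ Finset.Icc 1 N, l < l' → a l' < a l)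
    {l : ℕ} (hl : l ∈ Finset.Icc 1 N) (x : ℝ) :
    x < a l ↔ l ≤ ((Finset.Icc 1 N).filter (fun l' => x < a l')).card := by
  simp only [Finset.mem_Icc] at hl
  constructor
  · intro hx
    have hsub : Finset.Icc 1 l ⊆ (Finset.Icc 1 N).filter (fun l' => x < a l') := by
      intro l'' hl''
      simp only [Finset.mem_Icc] at hl''
      have hmem : l'' ∈ Finset.Icc 1 N := Finset.mem_Icc.mpr ⟨hl''.1, le_trans hl''.2 hl.2⟩
      refine Finset.mem_filter.mpr ⟨hmem, ?_⟩
      rcases eq_or_lt_of_le hl''.2 with h | h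
      · rwa [h]
      · exact hx.trans (ha l'' hmem l (Finset.mem_Icc.mpr hl) h)
    calc l = (Finset.Icc 1 l).card := by simp
    _ ≤ _ := Finset.card_le_card hsub
  · intro hcard
    by_contra hx
    push_neg at hx
    have hsub : (Finset.Icc 1 N).filter (fun l' => x < a l') ⊆ Finset.Icc 1 (l-1) := by
      intro l' hl'
      simp only [Finset.mem_filter, Finset.mem_Icc] at hl'
      refine Finset.mem_Icc.mpr ⟨hl'.1.1, ?_⟩
      by_contra hge
      push_neg at hge
      have hlle : l ≤ l' := by omega
      have hle : a l' ≤ a l := by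
        rcases eq_or_lt_of_le hlle with h | h
        · rw [h]
        · exact le_of_lt (ha l (Finset.mem_Icc.mpr hl) l' (Finset.mem_Icc.mpr hl'.1) h)
      exact absurd (hl'.2.trans_le (hle.trans hx)) (lt_irrefl x)
    have := Finset.card_le_card hsub
    simp [Nat.card_Icc] at this
    omega

/-- Lemma B.4 of the paper, parts (i), (iii), (iv): if
`p_i = ℓ/(n+1)` and the last SL rejection is test point `i`, then (i) `H_ℓ`
coincides with the SL objective `ℓ'/(n+1) − (α/m)·#{j : p_j ≤ ℓ'/(n+1)}`;
(ii) `ℓ` is the maximum of the argmin of `H_ℓ` over `{0,…,n+1}`; and (iii) if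
`ℓ ≥ 2` then `M_ℓ − M_{ℓ−1} ≥ 1/(n+1)`. -/
theorem Hfun_properties
    (n m : ℕ) (hn : 1 ≤ n) (hm : 1 ≤ m)
    (s : ℕ → ℝ) (hdist : Set.InjOn s (Finset.Icc 1 (n + m)))
    (σ : ℕ → ℕ) (hσ : SortsTest n m s σ)
    (α : ℝ) (hα : α ∈ Set.Ioo (0 : ℝ) 1)
    (i : ℕ) (hi : i ∈ Finset.Icc 1 m)
    (e : ℕ → ℕ)
    (he : Set.BijOn e (Finset.Icc 1 (n + 1)) ((Finset.Icc 1 n : Set ℕ) ∪ {n + i}))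
    (a : ℕ → ℝ) (hae : ∀ l ∈ Finset.Icc 1 (n + 1), a l = s (e l))
    (hasort : ∀ l ∈ Finset.Icc 1 (n + 1), ∀ l' ∈ Finset.Icc 1 (n + 1),
      l < l' → a l' < a l)
    (ℓ : ℕ) (hℓ : ℓ ∈ Finset.Icc 1 (n + 1))
    (hp : pval n s i = (ℓ : ℝ) / (n + 1))
    (hσk : σ (khatSL n m α s σ) = i) :
    (∀ l' ∈ Finset.Icc 1 (n + 1),
      Hfun n m α s i a ℓ l'
        = (l' : ℝ) / (n + 1) - α / m * ((Finset.Icc 1 m).filter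
            (fun j => pval n s j ≤ (l' : ℝ) / (n + 1))).card)
      ∧
    ℓ = maxArgmin (n + 1) (fun l' => Hfun n m α s i a ℓ l')
      ∧
    (2 ≤ ℓ → 1 / ((n : ℝ) + 1)
        ≤ Mfun n m α s i a ℓ - Mfun n m α s i a (ℓ - 1)) := by
  classical
  obtain ⟨hα0, hα1⟩ := hα
  obtain ⟨hσ0, hσbij, hσsort⟩ := hσ
  have hiI := hi
  have hℓI := hℓ
  simp only [Finset.mem_Icc] at hi hℓ
  have hn1 : (0:ℝ) < (n:ℝ) + 1 := by positivity
  have hm0 : (0:ℝ) < (m:ℝ) := by exact_mod_cast hm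
  -- the combined calibration + test-i index set
  set T : Finset ℕ := insert (n+i) (Finset.Icc 1 n) with hT
  have hTc : (↑T : Set ℕ) = (↑(Finset.Icc 1 n) : Set ℕ) ∪ {n + i} := by
    ext x; simp only [hT, Finset.coe_insert, Set.mem_insert_iff, Finset.mem_coe,
      Set.mem_union, Set.mem_singleton_iff, Finset.coe_Icc, Set.mem_Icc, Finset.mem_Icc]
    tauto
  have he' : Set.BijOn e (Finset.Icc 1 (n+1)) (↑T : Set ℕ) := by rw [hTc]; exact he
  have hemem : ∀ l' ∈ Finset.Icc 1 (n+1), e l' ∈ T := by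
    intro l' hl'
    exact Finset.mem_coe.mp (he'.mapsTo (Finset.mem_coe.mpr hl'))
  have hTsub : ∀ c' ∈ T, c' ∈ Finset.Icc 1 (n+m) := by
    intro c' hc'
    simp only [hT, Finset.mem_insert, Finset.mem_Icc] at hc' ⊢
    omega
  have hnimem : n + i ∉ Finset.Icc 1 n := by simp; omega
  -- counting via the enumeration e
  have hcard : ∀ x : ℝ, ((Finset.Icc 1 (n+1)).filter (fun l' => x < a l')).card
      = (T.filter (fun c' => x < s c')).card := by
    intro x
    apply Finset.card_bij (fun l' _ => e l')
    · intro l' hl'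
      have h1 := Finset.mem_filter.mp hl'
      exact Finset.mem_filter.mpr ⟨hemem l' h1.1, by rw [← hae l' h1.1]; exact h1.2⟩
    · intro l1 h1 l2 h2 hee
      exact he'.injOn (Finset.mem_coe.mpr (Finset.mem_filter.mp h1).1)
        (Finset.mem_coe.mpr (Finset.mem_filter.mp h2).1) hee
    · intro c' hc'
      have h1 := Finset.mem_filter.mp hc'
      obtain ⟨l', hl', hel'⟩ := he'.surjOn (Finset.mem_coe.mpr h1.1)
      have hl'' : l' ∈ Finset.Icc 1 (n+1) := Finset.mem_coe.mp hl'
      exact ⟨l', Finset.mem_filter.mpr ⟨hl'', by rw [hae l' hl'', hel']; exact h1.2⟩, hel'⟩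
  -- strict vs non-strict comparisons for test scores
  have hflt : ∀ j ∈ Finset.Icc 1 m, (Finset.Icc 1 n).filter (fun c' => s (n+j) < s c')
      = (Finset.Icc 1 n).filter (fun c' => s (n+j) ≤ s c') := by
    intro j hj
    apply Finset.filter_congr
    intro c' hc'
    simp only [Finset.mem_Icc] at hc' hj
    have hne : s (n+j) ≠ s c' := by
      intro hEq
      have h1 : (n+j) ∈ (↑(Finset.Icc 1 (n+m)) : Set ℕ) := by
        simp only [Finset.coe_Icc, Set.mem_Icc]; omega
      have h2 : c' ∈ (↑(Finset.Icc 1 (n+m)) : Set ℕ) := by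
        simp only [Finset.coe_Icc, Set.mem_Icc]; omega
      have := hdist h1 h2 hEq
      omega
    exact ⟨le_of_lt, fun h => h.lt_of_ne hne⟩
  -- p-value comparisons as integer comparisons
  have hple : ∀ j, ∀ l' : ℕ, (pval n s j ≤ (l':ℝ)/((n:ℝ)+1)
      ↔ ((Finset.Icc 1 n).filter (fun c' => s (n+j) ≤ s c')).card + 1 ≤ l') := by
    intro j l'
    rw [pval, div_le_div_iff_of_pos_right hn1]
    norm_cast
    omega
  have hci : ((Finset.Icc 1 n).filter (fun c' => s (n+i) ≤ s c')).card + 1 = ℓ := by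
    have h := hp
    rw [pval, div_eq_div_iff (ne_of_gt hn1) (ne_of_gt hn1)] at h
    have h2 : (1:ℝ) + ((Finset.Icc 1 n).filter (fun c' => s (n+i) ≤ s c')).card = ℓ :=
      mul_right_cancel₀ (ne_of_gt hn1) h
    have h3 : 1 + ((Finset.Icc 1 n).filter (fun c' => s (n+i) ≤ s c')).card = ℓ := by
      exact_mod_cast h2
    omega
  -- transfer count to the full set T
  have htT : ∀ j ∈ Finset.Icc 1 m,
      ((Finset.Icc 1 (n+1)).filter (fun l' => s (n+j) < a l')).card
      = ((Finset.Icc 1 n).filter (fun c' => s (n+j) ≤ s c')).card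
        + (if s (n+j) < s (n+i) then 1 else 0) := by
    intro j hj
    rw [hcard, hT, Finset.filter_insert]
    split
    · rw [Finset.card_insert_of_notMem (fun hmem => hnimem (Finset.mem_of_mem_filter _ hmem)),
        hflt j hj]
    · rw [hflt j hj]; simp
  -- a ℓ is the i-th test score
  have haℓ : a ℓ = s (n+i) := by
    have hiT : (n + i : ℕ) ∈ (↑T : Set ℕ) := by simp [hT]
    obtain ⟨l₀, hl₀, hel₀⟩ := he'.surjOn hiT
    have hl₀' : l₀ ∈ Finset.Icc 1 (n+1) := Finset.mem_coe.mp hl₀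
    have ha₀ : a l₀ = s (n+i) := by rw [hae l₀ hl₀', hel₀]
    have hti : ((Finset.Icc 1 (n+1)).filter (fun l' => s (n+i) < a l')).card = ℓ - 1 := by
      rw [htT i hiI, if_neg (lt_irrefl _)]
      omega
    have h2 := cnt_ge_iff (n+1) a hasort hl₀' (s (n+i))
    rw [hti] at h2
    have hge : ℓ ≤ l₀ := by
      by_contra hc
      push_neg at hc
      have h3 : l₀ ≤ ℓ - 1 := by omega
      have := h2.mpr h3
      rw [ha₀] at this
      exact lt_irrefl _ this
    have hle : l₀ ≤ ℓ := by
      by_contra hc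
      push_neg at hc
      have h3 : s (n+i) < a ℓ := by rw [← ha₀]; exact hasort ℓ hℓI l₀ hl₀' hc
      have := (cnt_ge_iff (n+1) a hasort hℓI (s (n+i))).mp h3
      rw [hti] at this
      simp only [Finset.mem_Icc] at hl₀'
      omega
    have : l₀ = ℓ := le_antisymm hle hge
    rw [← this, ha₀]
  -- master lemma: for each test point j ≠ i, everything in terms of t j
  have hmaster : ∀ j ∈ Finset.Icc 1 m, j ≠ i → ∃ t : ℕ, t ≤ n + 1 ∧
      (∀ l' ∈ Finset.Icc 1 (n+1), (a l' ≤ s (n+j) ↔ t < l')) ∧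
      (s (n+j) < s (n+i) ↔ ℓ ≤ t) ∧
      (∀ l' : ℕ, (pval n s j ≤ (l':ℝ)/((n:ℝ)+1)
        ↔ (if ℓ ≤ t then t else t + 1) ≤ l')) := by
    intro j hj hji
    refine ⟨((Finset.Icc 1 (n+1)).filter (fun l' => s (n+j) < a l')).card, ?_, ?_, ?_, ?_⟩
    · have := Finset.card_filter_le (Finset.Icc 1 (n+1)) (fun l' => s (n+j) < a l')
      simpa [Nat.card_Icc] using this
    · intro l' hl'
      have h := cnt_ge_iff (n+1) a hasort hl' (s (n+j))
      constructor
      · intro hle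
        by_contra hc
        push_neg at hc
        exact absurd (h.mpr hc) (not_lt.mpr hle)
      · intro hlt
        by_contra hc
        push_neg at hc
        exact absurd (h.mp hc) (not_le.mpr hlt)
    · rw [← haℓ]
      exact cnt_ge_iff (n+1) a hasort hℓI (s (n+j))
    · intro l'
      rw [hple j l']
      have h4 := htT j hj
      have h3 : s (n+j) < s (n+i) ↔ ℓ ≤ ((Finset.Icc 1 (n+1)).filter
          (fun l' => s (n+j) < a l')).card := by
        rw [← haℓ]
        exact cnt_ge_iff (n+1) a hasort hℓI (s (n+j))
      by_cases hlt : s (n+j) < s (n+i)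
      · rw [if_pos (h3.mp hlt)]
        rw [if_pos hlt] at h4
        omega
      · rw [if_neg (fun hc => hlt (h3.mpr hc))]
        rw [if_neg hlt] at h4
        omega
  -- === SL objective G and properties of K = khatSL ===
  set G : ℕ → ℝ := fun k => pOrd n s σ k - α * k / m with hG
  have hG0 : G 0 = 0 := by simp [hG, pOrd]
  have hGk : ∀ k, k ≠ 0 → G k = pval n s (σ k) - α * k / m := by
    intro k hk; simp [hG, pOrd, hk]
  set K := khatSL n m α s σ with hKdef
  have hKeq : K = sSup {k | k ≤ m ∧ ∀ k' ≤ m, G k ≤ G k'} := rfl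
  have hSGbdd : BddAbove {k | k ≤ m ∧ ∀ k' ≤ m, G k ≤ G k'} := ⟨m, fun k hk => hk.1⟩
  have hSGne : {k | k ≤ m ∧ ∀ k' ≤ m, G k ≤ G k'}.Nonempty := by
    obtain ⟨k0, hk0mem, hk0⟩ := Finset.exists_min_image (Finset.range (m+1)) G ⟨0, by simp⟩
    refine ⟨k0, by simpa [Nat.lt_succ_iff] using hk0mem, fun k' hk' => hk0 k' ?_⟩
    simp [Nat.lt_succ_iff, hk']
  have hKmem : K ∈ {k | k ≤ m ∧ ∀ k' ≤ m, G k ≤ G k'} := by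
    rw [hKeq]; exact Nat.sSup_mem hSGne hSGbdd
  have hKm : K ≤ m := hKmem.1
  have hKmin : ∀ k' ≤ m, G K ≤ G k' := hKmem.2
  have hKmax : ∀ k, k ≤ m → (∀ k' ≤ m, G k ≤ G k') → k ≤ K := by
    intro k h1 h2
    rw [hKeq]
    exact le_csSup hSGbdd ⟨h1, h2⟩
  have hK0 : K ≠ 0 := by
    intro h
    rw [h, hσ0] at hσk
    omega
  have hKI : K ∈ Finset.Icc 1 m := by simp only [Finset.mem_Icc]; omega
  have hpK : pval n s (σ K) = (ℓ:ℝ)/((n:ℝ)+1) := by rw [hσk]; exact hp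
  -- p-values are monotone along σ
  have hpmono : ∀ k ∈ Finset.Icc 1 m, ∀ k' ∈ Finset.Icc 1 m, k ≤ k' →
      pval n s (σ k) ≤ pval n s (σ k') := by
    intro k hk k' hk' hkk
    rcases eq_or_lt_of_le hkk with h | h
    · rw [h]
    · have hs := hσsort k hk k' hk' h
      rw [pval, pval]
      have hsub : (Finset.Icc 1 n).filter (fun c' => s (n + σ k) ≤ s c') ⊆
          (Finset.Icc 1 n).filter (fun c' => s (n + σ k') ≤ s c') := by
        intro c' hc'
        simp only [Finset.mem_filter] at hc' ⊢
        exact ⟨hc'.1, (le_of_lt hs).trans hc'.2⟩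
      have hcc := Finset.card_le_card hsub
      gcongr
  -- the counting function along thresholds
  set NN : ℕ → ℕ := fun l' => ((Finset.Icc 1 m).filter
      (fun j => pval n s j ≤ (l':ℝ)/((n:ℝ)+1))).card with hNN
  have hNm : ∀ l', NN l' ≤ m := by
    intro l'
    have := Finset.card_filter_le (Finset.Icc 1 m)
      (fun j => pval n s j ≤ (l':ℝ)/((n:ℝ)+1))
    simpa [hNN, Nat.card_Icc] using this
  have hNmono : ∀ l1 l2 : ℕ, l1 ≤ l2 → NN l1 ≤ NN l2 := by
    intro l1 l2 h12
    apply Finset.card_le_card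
    intro j hj
    simp only [Finset.mem_filter] at hj ⊢
    refine ⟨hj.1, hj.2.trans ?_⟩
    gcongr
  have hNa : ∀ k ∈ Finset.Icc 1 m, ∀ l' : ℕ,
      pval n s (σ k) ≤ (l':ℝ)/((n:ℝ)+1) → k ≤ NN l' := by
    intro k hk l' hpk
    have hkI := Finset.mem_Icc.mp hk
    have hsub : (Finset.Icc 1 k).image σ ⊆ (Finset.Icc 1 m).filter
        (fun j => pval n s j ≤ (l':ℝ)/((n:ℝ)+1)) := by
      intro j hj
      obtain ⟨k'', hk'', rfl⟩ := Finset.mem_image.mp hj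
      have hk''2 := Finset.mem_Icc.mp hk''
      have hk''I : k'' ∈ Finset.Icc 1 m := by simp only [Finset.mem_Icc]; omega
      refine Finset.mem_filter.mpr ⟨Finset.mem_coe.mp (hσbij.mapsTo (Finset.mem_coe.mpr hk''I)), ?_⟩
      exact (hpmono k'' hk''I k hk hk''2.2).trans hpk
    have himg : ((Finset.Icc 1 k).image σ).card = k := by
      rw [Finset.card_image_of_injOn, Nat.card_Icc]
      · omega
      · intro x hx y hy hxy
        have hx2 := Finset.mem_Icc.mp (Finset.mem_coe.mp hx)
        have hy2 := Finset.mem_Icc.mp (Finset.mem_coe.mp hy)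
        exact hσbij.injOn (by simp only [Finset.coe_Icc, Set.mem_Icc]; omega)
          (by simp only [Finset.coe_Icc, Set.mem_Icc]; omega) hxy
    calc k = ((Finset.Icc 1 k).image σ).card := himg.symm
    _ ≤ _ := Finset.card_le_card hsub
  have hNb : ∀ l' : ℕ, NN l' = 0 ∨ (1 ≤ NN l' ∧ NN l' ≤ m ∧
      pval n s (σ (NN l')) ≤ (l':ℝ)/((n:ℝ)+1)) := by
    intro l'
    by_cases h0 : NN l' = 0
    · exact Or.inl h0
    right
    refine ⟨by omega, hNm l', ?_⟩
    by_contra hc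
    push_neg at hc
    have hsub : (Finset.Icc 1 m).filter (fun j => pval n s j ≤ (l':ℝ)/((n:ℝ)+1))
        ⊆ (Finset.Icc 1 (NN l' - 1)).image σ := by
      intro j hj
      have hj1 := Finset.mem_filter.mp hj
      obtain ⟨k'', hk'', hk''j⟩ := hσbij.surjOn (Finset.mem_coe.mpr hj1.1)
      have hk''I : k'' ∈ Finset.Icc 1 m := Finset.mem_coe.mp hk''
      have hk''2 := Finset.mem_Icc.mp hk''I
      refine Finset.mem_image.mpr ⟨k'', ?_, hk''j⟩
      simp only [Finset.mem_Icc]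
      refine ⟨hk''2.1, ?_⟩
      by_contra hgt
      push_neg at hgt
      have hNI : NN l' ∈ Finset.Icc 1 m := by
        simp only [Finset.mem_Icc]
        exact ⟨by omega, hNm l'⟩
      have hmono := hpmono (NN l') hNI k'' hk''I (by omega)
      rw [hk''j] at hmono
      exact absurd (hmono.trans hj1.2) (not_le.mpr hc)
    have hcard2 : NN l' ≤ NN l' - 1 := by
      have h1 := Finset.card_le_card hsub
      have h2 := Finset.card_image_le (s := Finset.Icc 1 (NN l' - 1)) (f := σ)
      have h3 : (Finset.Icc 1 (NN l' - 1)).card = NN l' - 1 := by simp [Nat.card_Icc]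
      calc NN l' ≤ _ := h1
      _ ≤ _ := h2
      _ = _ := h3
    omega
  have hNK : NN ℓ = K := by
    have hNKge : K ≤ NN ℓ := hNa K hKI ℓ (le_of_eq hpK)
    have hNKle : NN ℓ ≤ K := by
      rcases hNb ℓ with h0 | ⟨h1, h2, h3⟩
      · omega
      by_contra hc
      push_neg at hc
      have hGlt : G (NN ℓ) < G K := by
        rw [hGk (NN ℓ) (by omega), hGk K hK0, hpK]
        have hcast : (K:ℝ) < (NN ℓ : ℕ) := by exact_mod_cast hc
        have h6 : 0 < α/m * (((NN ℓ : ℕ):ℝ) - K) := mul_pos (div_pos hα0 hm0) (by linarith)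
        have e1 : α * ((NN ℓ : ℕ):ℝ)/m = α/m * ((NN ℓ : ℕ):ℝ) := by ring
        have e2 : α * (K:ℝ)/m = α/m * (K:ℝ) := by ring
        linarith [h3]
      exact absurd (hKmin (NN ℓ) h2) (not_le.mpr hGlt)
    omega
  -- === Part (i) ===
  have part1 : ∀ l' ∈ Finset.Icc 1 (n + 1),
      Hfun n m α s i a ℓ l'
        = (l' : ℝ) / (n + 1) - α / m * ((Finset.Icc 1 m).filter
            (fun j => pval n s j ≤ (l' : ℝ) / (n + 1))).card := by
    intro l' hl'I2
    have hl'2 := Finset.mem_Icc.mp hl'I2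
    have hl'0 : l' ≠ 0 := by omega
    simp only [Hfun, if_neg hl'0]
    suffices hcnt : (if ℓ ≤ l' then
        1 + (((((Finset.Icc 1 m).erase i).filter
            (fun j => l' + 1 ≤ n + 1 → a (l' + 1) ≤ s (n + j))).card : ℝ))
        else ((((Finset.Icc 1 m).erase i).filter
            (fun j => a l' ≤ s (n + j))).card : ℝ))
        = (((Finset.Icc 1 m).filter (fun j => pval n s j ≤ (l' : ℝ) / (n + 1))).card : ℝ) by
      rw [hcnt]
    by_cases hll : ℓ ≤ l'
    · rw [if_pos hll]
      have hiP : pval n s i ≤ (l':ℝ)/((n:ℝ)+1) := by rw [hple]; omega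
      have hiF : i ∈ (Finset.Icc 1 m).filter (fun j => pval n s j ≤ (l':ℝ)/((n:ℝ)+1)) :=
        Finset.mem_filter.mpr ⟨hiI, hiP⟩
      have hcongr : ((Finset.Icc 1 m).erase i).filter
          (fun j => l' + 1 ≤ n + 1 → a (l' + 1) ≤ s (n + j))
          = ((Finset.Icc 1 m).erase i).filter (fun j => pval n s j ≤ (l':ℝ)/((n:ℝ)+1)) := by
        apply Finset.filter_congr
        intro j hj
        obtain ⟨t, htle, hkey, hlts, hpiff⟩ :=
          hmaster j (Finset.mem_of_mem_erase hj) (Finset.ne_of_mem_erase hj)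
        rw [hpiff l']
        rcases Nat.lt_or_ge l' (n+1) with hcase | hcase
        · have hl1 : l' + 1 ∈ Finset.Icc 1 (n+1) := by simp only [Finset.mem_Icc]; omega
          constructor
          · intro hg
            have hx := (hkey _ hl1).mp (hg (by omega))
            split <;> omega
          · intro hg _
            rw [hkey _ hl1]
            split at hg <;> omega
        · constructor
          · intro _
            split <;> omega
          · intro _ hguard
            exact absurd hguard (by omega)
      rw [hcongr, Finset.filter_erase, Finset.card_erase_of_mem hiF]
      have hpos : 1 ≤ ((Finset.Icc 1 m).filter
          (fun j => pval n s j ≤ (l':ℝ)/((n:ℝ)+1))).card :=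
        Finset.card_pos.mpr ⟨i, hiF⟩
      rw [Nat.cast_sub hpos]
      push_cast
      ring
    · rw [if_neg hll]
      have hiP : ¬ pval n s i ≤ (l':ℝ)/((n:ℝ)+1) := by rw [hple]; omega
      have hiF : i ∉ (Finset.Icc 1 m).filter
          (fun j => pval n s j ≤ (l':ℝ)/((n:ℝ)+1)) := by
        intro hc
        exact hiP (Finset.mem_filter.mp hc).2
      have hcongr : ((Finset.Icc 1 m).erase i).filter (fun j => a l' ≤ s (n + j))
          = ((Finset.Icc 1 m).erase i).filter
            (fun j => pval n s j ≤ (l':ℝ)/((n:ℝ)+1)) := by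
        apply Finset.filter_congr
        intro j hj
        obtain ⟨t, htle, hkey, hlts, hpiff⟩ :=
          hmaster j (Finset.mem_of_mem_erase hj) (Finset.ne_of_mem_erase hj)
        rw [hpiff l', hkey _ hl'I2]
        split <;> omega
      rw [hcongr, Finset.filter_erase, Finset.erase_eq_of_notMem hiF]
  -- H in terms of NN
  have hHval : ∀ l' ∈ Finset.Icc 1 (n + 1),
      Hfun n m α s i a ℓ l' = (l':ℝ)/((n:ℝ)+1) - α/m * (NN l' : ℕ) := by
    intro l' hl'
    rw [part1 l' hl']
  have hH0 : Hfun n m α s i a ℓ 0 = 0 := by simp [Hfun]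
  have hHℓ : Hfun n m α s i a ℓ ℓ = G K := by
    rw [hHval ℓ hℓI, hNK, hGk K hK0, hpK]
    ring
  have hmin : ∀ l'' ≤ n + 1, Hfun n m α s i a ℓ ℓ ≤ Hfun n m α s i a ℓ l'' := by
    intro l'' hl''
    rcases Nat.eq_zero_or_pos l'' with h0 | hpos
    · rw [h0, hH0, hHℓ, ← hG0]
      exact hKmin 0 (Nat.zero_le m)
    · have hl''I : l'' ∈ Finset.Icc 1 (n+1) := by simp only [Finset.mem_Icc]; omega
      rw [hHℓ, hHval l'' hl''I]
      rcases hNb l'' with h0 | ⟨h1, h2, h3⟩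
      · rw [h0]
        have hdivpos : (0:ℝ) < (l'':ℝ)/((n:ℝ)+1) :=
          div_pos (by exact_mod_cast hpos) hn1
        have hGK0 : G K ≤ 0 := by rw [← hG0]; exact hKmin 0 (Nat.zero_le m)
        push_cast
        rw [mul_zero, sub_zero]
        exact hGK0.trans_lt hdivpos |>.le
      · have hGn := hKmin (NN l'') h2
        rw [hGk (NN l'') (by omega)] at hGn
        have e1 : α * ((NN l'' : ℕ):ℝ) / m = α/m * ((NN l'' : ℕ):ℝ) := by ring
        linarith [h3]
  -- === Part (ii) ===
  have hSmem : ℓ ∈ {l'' | l'' ≤ n + 1 ∧ ∀ l3 ≤ n + 1,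
      Hfun n m α s i a ℓ l'' ≤ Hfun n m α s i a ℓ l3} := ⟨hℓ.2, hmin⟩
  have hSbdd : BddAbove {l'' | l'' ≤ n + 1 ∧ ∀ l3 ≤ n + 1,
      Hfun n m α s i a ℓ l'' ≤ Hfun n m α s i a ℓ l3} := ⟨n+1, fun x hx => hx.1⟩
  have hSmax : ∀ l' ∈ {l'' | l'' ≤ n + 1 ∧ ∀ l3 ≤ n + 1,
      Hfun n m α s i a ℓ l'' ≤ Hfun n m α s i a ℓ l3}, l' ≤ ℓ := by
    rintro l' ⟨hl'n, hl'min⟩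
    by_contra hc
    push_neg at hc
    have hl'I2 : l' ∈ Finset.Icc 1 (n+1) := by simp only [Finset.mem_Icc]; omega
    have heq : Hfun n m α s i a ℓ l' = Hfun n m α s i a ℓ ℓ :=
      le_antisymm (hl'min ℓ hℓ.2) (hmin l' hl'n)
    have hKle : K ≤ NN l' := hNK ▸ hNmono ℓ l' (le_of_lt hc)
    have hNle : NN l' ≤ K := by
      rcases hNb l' with h0 | ⟨h1, h2, h3⟩
      · omega
      apply hKmax (NN l') h2
      intro k' hk'
      have hGn : G (NN l') ≤ Hfun n m α s i a ℓ l' := by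
        rw [hGk (NN l') (by omega), hHval l' hl'I2]
        have e1 : α * ((NN l' : ℕ):ℝ) / m = α/m * ((NN l' : ℕ):ℝ) := by ring
        linarith [h3]
      have hGnK : G (NN l') ≤ G K := by
        rw [← hHℓ]
        exact hGn.trans (le_of_eq heq)
      exact hGnK.trans (hKmin k' hk')
    have hNKeq : NN l' = K := le_antisymm hNle hKle
    have hstrict : Hfun n m α s i a ℓ ℓ < Hfun n m α s i a ℓ l' := by
      rw [hHval ℓ hℓI, hHval l' hl'I2, hNK, hNKeq]
      have hcd : (ℓ:ℝ)/((n:ℝ)+1) < (l':ℝ)/((n:ℝ)+1) := by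
        rw [div_lt_div_iff_of_pos_right hn1]
        exact_mod_cast hc
      linarith
    linarith [heq, hstrict]
  have part2 : ℓ = maxArgmin (n + 1) (fun l' => Hfun n m α s i a ℓ l') := by
    have hdef : maxArgmin (n + 1) (fun l' => Hfun n m α s i a ℓ l')
        = sSup {l'' | l'' ≤ n + 1 ∧ ∀ l3 ≤ n + 1,
          Hfun n m α s i a ℓ l'' ≤ Hfun n m α s i a ℓ l3} := rfl
    rw [hdef]
    exact le_antisymm (le_csSup hSbdd hSmem) (csSup_le ⟨ℓ, hSmem⟩ hSmax)
  refine ⟨part1, part2, ?_⟩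
  -- === Part (iii) ===
  intro h2ℓ
  have hgap : ∀ j ∈ (Finset.Icc 1 m).erase i,
      ((ℓ + 1 ≤ n + 1 → a (ℓ + 1) ≤ s (n + j)) ↔ a ℓ ≤ s (n + j)) := by
    intro j hj
    have hjm := Finset.mem_of_mem_erase hj
    have hji := Finset.ne_of_mem_erase hj
    obtain ⟨t, htle, hkey, hlts, hpiff⟩ := hmaster j hjm hji
    have htne : t ≠ ℓ := by
      intro hteq
      have hsj : s (n + j) < s (n + i) := hlts.mpr (by omega)
      have hpj : pval n s j ≤ (ℓ:ℝ)/((n:ℝ)+1) := (hpiff ℓ).mpr (by split <;> omega)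
      obtain ⟨k, hk, hkj⟩ := hσbij.surjOn (Finset.mem_coe.mpr hjm)
      have hkI : k ∈ Finset.Icc 1 m := Finset.mem_coe.mp hk
      have hk2 := Finset.mem_Icc.mp hkI
      have hkK : K < k := by
        rcases lt_trichotomy k K with h | h | h
        · have hss := hσsort k hkI K hKI h
          rw [hσk, hkj] at hss
          exact absurd hsj (not_lt.mpr hss.le)
        · exfalso
          apply hji
          rw [← hkj, h, hσk]
        · exact h
      have hGlt : G k < G K := by
        rw [hGk k (by omega), hGk K hK0, hpK, hkj]
        have hcast : (K:ℝ) < (k:ℝ) := by exact_mod_cast hkK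
        have h6 : 0 < α/m * ((k:ℝ) - K) := mul_pos (div_pos hα0 hm0) (by linarith)
        have e1 : α * (k:ℝ)/m = α/m * (k:ℝ) := by ring
        have e2 : α * (K:ℝ)/m = α/m * (K:ℝ) := by ring
        linarith [hpj]
      exact absurd (hKmin k hk2.2) (not_le.mpr hGlt)
    have hRHS := hkey ℓ hℓI
    rw [hRHS]
    rcases Nat.lt_or_ge ℓ (n+1) with hcase | hcase
    · have hl1I : ℓ + 1 ∈ Finset.Icc 1 (n+1) := by simp only [Finset.mem_Icc]; omega
      have hL := hkey (ℓ+1) hl1I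
      constructor
      · intro hg
        have := hL.mp (hg (by omega))
        omega
      · intro hlt' _
        exact hL.mpr (by omega)
    · constructor
      · intro _
        omega
      · intro _ hguard
        exact absurd hguard (by omega)
  have hfeq : ((Finset.Icc 1 m).erase i).filter
        (fun j => ℓ + 1 ≤ n + 1 → a (ℓ + 1) ≤ s (n + j))
      = ((Finset.Icc 1 m).erase i).filter (fun j => a ℓ ≤ s (n + j)) :=
    Finset.filter_congr hgap
  have hHa : Hfun n m α s i a ℓ ℓ = (ℓ:ℝ)/((n:ℝ)+1) - α/m * (1 +
      ((((Finset.Icc 1 m).erase i).filter (fun j => a ℓ ≤ s (n + j))).card : ℝ)) := by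
    simp only [Hfun, if_neg (by omega : ℓ ≠ 0), if_pos (le_refl ℓ)]
    rw [hfeq]
  have hℓ1 : ℓ - 1 + 1 = ℓ := by omega
  have hHb : Hfun n m α s i a (ℓ-1) (ℓ-1) = ((ℓ-1 : ℕ):ℝ)/((n:ℝ)+1) - α/m * (1 +
      ((((Finset.Icc 1 m).erase i).filter (fun j => a ℓ ≤ s (n + j))).card : ℝ)) := by
    simp only [Hfun, if_neg (by omega : ℓ - 1 ≠ 0), if_pos (le_refl (ℓ-1)), hℓ1]
    have hfeq2 : ((Finset.Icc 1 m).erase i).filter (fun j => ℓ ≤ n + 1 → a ℓ ≤ s (n + j))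
        = ((Finset.Icc 1 m).erase i).filter (fun j => a ℓ ≤ s (n + j)) := by
      apply Finset.filter_congr
      intro j hj
      exact ⟨fun hg => hg hℓ.2, fun hg _ => hg⟩
    rw [hfeq2]
  have hMdef : ∀ l'', Mfun n m α s i a l''
      = (Finset.range (n + 2)).inf' Finset.nonempty_range_add_one
        (fun l' => Hfun n m α s i a l'' l') := fun _ => rfl
  have hMℓ : Mfun n m α s i a ℓ = Hfun n m α s i a ℓ ℓ := by
    rw [hMdef]
    apply le_antisymm
    · exact Finset.inf'_le _ (by simp only [Finset.mem_range]; omega)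
    · apply Finset.le_inf'
      intro b hb
      exact hmin b (by simp only [Finset.mem_range] at hb; omega)
  have hMb : Mfun n m α s i a (ℓ-1) ≤ Hfun n m α s i a (ℓ-1) (ℓ-1) := by
    rw [hMdef]
    exact Finset.inf'_le _ (by simp only [Finset.mem_range]; omega)
  rw [hMℓ, hHa]
  rw [hHb] at hMb
  have hcast : ((ℓ - 1 : ℕ):ℝ) = (ℓ:ℝ) - 1 := by
    rw [Nat.cast_sub (by omega)]
    norm_num
  rw [hcast] at hMb
  have hsplit : ((ℓ:ℝ) - 1)/((n:ℝ)+1) = (ℓ:ℝ)/((n:ℝ)+1) - 1/((n:ℝ)+1) := by ring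
  linarith [hMb]

end
end
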